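/- In the ring A = ℂ[x,y,z]/(x² + y² + z² − z), with λ(a) = (1−2z)x, λ(b) = (1−3z)y, λ(c) = (1−z)z, and w = −(9/4)λ(a)² + 9z²λ(c) − (9/4)λ(c), the identity (5/12)y² + (5/6)λ(b)y + 2λ(b)(1−2z)y + (9/2)λ(a)² + (1−2z)w − (1−2z)λ(b)² = 0 holds; in particular y is integral over the subring ℂ[λ(a), λ(b), λ(c), z] ⊆ A. -/

import Mathlib

/-! Modulo the sphere relation `x² + y² + z² = z`, the left-hand side of the identity is
`(9/4)(1 - 2z)²(1 + 2z)(x² + y² + z² - z)`, hence zero. Its leading coefficient in `y` is the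
unit `5/12` and its other coefficients are polynomials in `λ(a), λ(b), λ(c), z`, so after
dividing by `5/12` it is a monic quadratic relation for `y` over `ℂ[λ(a), λ(b), λ(c), z]`. -/

open MvPolynomial

/-- The coordinate ring `A = ℂ[x,y,z]/(x² + y² + z² − z)` of the sphere. -/
abbrev sphereRing : Type :=
  MvPolynomial (Fin 3) ℂ ⧸
    Ideal.span {(X 0 ^ 2 + X 1 ^ 2 + X 2 ^ 2 - X 2 : MvPolynomial (Fin 3) ℂ)}

noncomputable abbrev sx : sphereRing := Ideal.Quotient.mk _ (X 0)
noncomputable abbrev sy : sphereRing := Ideal.Quotient.mk _ (X 1)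
noncomputable abbrev sz : sphereRing := Ideal.Quotient.mk _ (X 2)

/-- `λ(a) = (1−2z)x`, `λ(b) = (1−3z)y`, `λ(c) = (1−z)z` in `A`. -/
noncomputable abbrev la : sphereRing := (1 - 2 * sz) * sx
noncomputable abbrev lb : sphereRing := (1 - 3 * sz) * sy
noncomputable abbrev lc : sphereRing := (1 - sz) * sz

/-- `w = −(9/4)λ(a)² + 9z²λ(c) − (9/4)λ(c)`. -/
noncomputable abbrev wElt : sphereRing :=
  -(9 / 4 : ℂ) • la ^ 2 + (9 : ℂ) • (sz ^ 2 * lc) - (9 / 4 : ℂ) • lc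

theorem Subalgebra.isIntegral_of_smul_sq_add_mul_add_eq_zero {K A : Type*} [Field K] [CommRing A]
    [Algebra K A] (S : Subalgebra K A) {a : K} (ha : a ≠ 0) {s b c : A} (hb : b ∈ S) (hc : c ∈ S)
    (h : a • s ^ 2 + b * s + c = 0) : IsIntegral S s := by
  have monic_eq : s ^ 2 + (a⁻¹ • b) * s + a⁻¹ • c = 0 := by
    rw [← smul_eq_zero_iff_right ha, smul_add, smul_add, smul_mul_assoc, smul_inv_smul₀ ha,
      smul_inv_smul₀ ha, ← h]
  refine ⟨Polynomial.X ^ 2 + (Polynomial.C ⟨a⁻¹ • b, S.smul_mem hb _⟩ * Polynomial.X +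
    Polynomial.C ⟨a⁻¹ • c, S.smul_mem hc _⟩),
    Polynomial.monic_X_pow_add (Polynomial.degree_linear_le.trans_lt (by norm_num)), ?_⟩
  simpa [add_assoc] using monic_eq

theorem sphere_relation : sx ^ 2 + sy ^ 2 + sz ^ 2 = sz := by
  rw [← sub_eq_zero, ← map_pow, ← map_pow, ← map_pow, ← map_add, ← map_add, ← map_sub,
    Ideal.Quotient.eq_zero_iff_mem]
  exact Ideal.subset_span rfl

theorem sy_quadratic_relation :
    (5 / 12 : ℂ) • sy ^ 2 + (5 / 6 : ℂ) • (lb * sy) + 2 * lb * (1 - 2 * sz) * sy +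
      (9 / 2 : ℂ) • la ^ 2 + (1 - 2 * sz) * wElt - (1 - 2 * sz) * lb ^ 2 = 0 := by
  linear_combination (norm := algebra)
    (9 / 4 : ℂ) • ((1 - 2 * sz) ^ 2 * (1 + 2 * sz)) * sphere_relation

theorem wElt_mem {S : Subalgebra ℂ sphereRing} (hla : la ∈ S) (hlc : lc ∈ S) (hsz : sz ∈ S) :
    wElt ∈ S :=
  sub_mem (add_mem (S.smul_mem (pow_mem hla 2) _) (S.smul_mem (mul_mem (pow_mem hsz 2) hlc) _))
    (S.smul_mem hlc _)

/-- The identity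
`(5/12)y² + (5/6)λ(b)y + 2λ(b)(1−2z)y + (9/2)λ(a)² + (1−2z)w − (1−2z)λ(b)² = 0`
holds in `A`; in particular `y` is integral over `ℂ[λ(a), λ(b), λ(c), z]`. -/
theorem sy_integral :
    (5 / 12 : ℂ) • sy ^ 2 + (5 / 6 : ℂ) • (lb * sy) + 2 * lb * (1 - 2 * sz) * sy +
        (9 / 2 : ℂ) • la ^ 2 + (1 - 2 * sz) * wElt - (1 - 2 * sz) * lb ^ 2 = 0 ∧
      IsIntegral (Algebra.adjoin ℂ ({la, lb, lc, sz} : Set sphereRing)) sy := by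
  refine ⟨sy_quadratic_relation, ?_⟩
  set S := Algebra.adjoin ℂ ({la, lb, lc, sz} : Set sphereRing)
  have hla : la ∈ S := Algebra.subset_adjoin (by simp)
  have hlb : lb ∈ S := Algebra.subset_adjoin (by simp)
  have hlc : lc ∈ S := Algebra.subset_adjoin (by simp)
  have hsz : sz ∈ S := Algebra.subset_adjoin (by simp)
  have hu : 1 - 2 * sz ∈ S := sub_mem (one_mem S) (mul_mem (ofNat_mem S 2) hsz)
  refine S.isIntegral_of_smul_sq_add_mul_add_eq_zero (a := 5 / 12) (by norm_num)
    (b := (5 / 6 : ℂ) • lb + 2 * lb * (1 - 2 * sz))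
    (c := (9 / 2 : ℂ) • la ^ 2 + (1 - 2 * sz) * wElt - (1 - 2 * sz) * lb ^ 2)
    (add_mem (S.smul_mem hlb _) (mul_mem (mul_mem (ofNat_mem _ 2) hlb) hu))
    (sub_mem (add_mem (S.smul_mem (pow_mem hla 2) _) (mul_mem hu (wElt_mem hla hlc hsz)))
      (mul_mem hu (pow_mem hlb 2))) ?_
  linear_combination (norm := algebra) sy_quadratic_relation
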